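/- arXiv:2004.06439 — 3 statements merged into one kernel-verified Lean document; each statement's English description precedes it below -/
import Mathlib

section
/- Let B be a real symmetric 2^N × 2^N matrix with rows and columns indexed by {0,1}^N, and let A_1,…,A_N be real matrices with A_i of size m_i × n_i. Let C = B̃ ∘ (Â_1 ⊗ ⋯ ⊗ Â_N) be the matrix composition (where B̃(a,b) = B(ã,b̃) and ã_i = 1 iff a_i > m_i, and Â_i = [[‖A_i‖I, A_i],[A_iᵀ, ‖A_i‖I]]). Then ‖C‖ ≤ ‖B‖ · ∏_{i=1}^N ‖A_i‖. -/
/-!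
`P = Â₁ ⊗ ⋯ ⊗ Â_N` is positive semidefinite because each `Â_i` is: the quadratic form of `Â`
at `(x, y)` is `‖A‖ (|x|² + |y|²) + 2 ⟪x, A y⟫ ≥ ‖A‖ (|x| - |y|)²`. With `f a = ã`, the matrix
`C` is the Hadamard product of `B.submatrix f f` and `P`. Factor `P = Uᴴ U` and set
`W (c, k) a = [f a = c] · U k a`; then `C = Wᴴ (B ⊗ I) W`, so `‖C‖ ≤ ‖B‖ · ‖Wᴴ W‖`. Since the
`Â_i` are scalar on their diagonal blocks, `P a b = 0` whenever `ã = b̃` and `a ≠ b`, so `Wᴴ W`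
is the diagonal of `P`, whose entries are all `∏ i, ‖A_i‖`.
-/

open Matrix

/-- The spectral norm (largest singular value) of a real matrix. -/
noncomputable def matSpectralNorm {m n : Type*} [Fintype m] [Fintype n] [DecidableEq n]
    (A : Matrix m n ℝ) : ℝ :=
  ‖LinearMap.toContinuousLinearMap (Matrix.toEuclideanLin A)‖

/-- `hatMatrix A = [[‖A‖·I, A], [Aᵀ, ‖A‖·I]]`. -/
noncomputable def hatMatrix {m n : ℕ} (A : Matrix (Fin m) (Fin n) ℝ) :
    Matrix (Fin m ⊕ Fin n) (Fin m ⊕ Fin n) ℝ :=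
  Matrix.fromBlocks (matSpectralNorm A • (1 : Matrix (Fin m) (Fin m) ℝ)) A
    Aᵀ (matSpectralNorm A • (1 : Matrix (Fin n) (Fin n) ℝ))

/-- The matrix composition `C = B̃ ∘ (Â_1 ⊗ ⋯ ⊗ Â_N)`: rows and columns are indexed by tuples
`a` with `a i ∈ Fin (m i) ⊕ Fin (n i)`; `ã i = 1` iff `a i` lies in the second summand, and
`C a b = B ã b̃ · ∏ i, Â_i (a i) (b i)`. -/
noncomputable def matrixComposition {N : ℕ} {m n : Fin N → ℕ}
    (B : Matrix (Fin N → Bool) (Fin N → Bool) ℝ)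
    (A : ∀ i, Matrix (Fin (m i)) (Fin (n i)) ℝ) :
    Matrix (∀ i, Fin (m i) ⊕ Fin (n i)) (∀ i, Fin (m i) ⊕ Fin (n i)) ℝ :=
  Matrix.of fun a b =>
    B (fun i => (a i).isRight) (fun i => (b i).isRight) * ∏ i, hatMatrix (A i) (a i) (b i)

open scoped Matrix.Norms.L2Operator

namespace Matrix

section piKronecker

variable {ι R : Type*} [Fintype ι] {α β γ : ι → Type*}

def piKronecker [CommMonoid R] (M : ∀ i, Matrix (α i) (β i) R) :
    Matrix (∀ i, α i) (∀ i, β i) R :=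
  of fun a b => ∏ i, M i (a i) (b i)

@[simp]
lemma piKronecker_apply [CommMonoid R] (M : ∀ i, Matrix (α i) (β i) R) (a : ∀ i, α i)
    (b : ∀ i, β i) : piKronecker M a b = ∏ i, M i (a i) (b i) :=
  rfl

lemma piKronecker_mul [CommSemiring R] [DecidableEq ι] [∀ i, Fintype (β i)]
    (M : ∀ i, Matrix (α i) (β i) R) (M' : ∀ i, Matrix (β i) (γ i) R) :
    piKronecker M * piKronecker M' = piKronecker fun i => M i * M' i := by
  ext a c
  simp only [piKronecker_apply, mul_apply, Fintype.prod_sum, Finset.prod_mul_distrib]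

lemma conjTranspose_piKronecker [CommSemiring R] [StarRing R] (M : ∀ i, Matrix (α i) (β i) R) :
    (piKronecker M)ᴴ = piKronecker fun i => (M i)ᴴ := by
  ext a b
  simp [star_prod]

open scoped MatrixOrder ComplexOrder in
lemma PosSemidef.piKronecker {𝕜 : Type*} [RCLike 𝕜] [∀ i, Fintype (α i)]
    {M : ∀ i, Matrix (α i) (α i) 𝕜} (hM : ∀ i, (M i).PosSemidef) :
    (piKronecker M).PosSemidef := by
  classical
  choose S hS using fun i => CStarAlgebra.nonneg_iff_eq_star_mul_self.mp (hM i).nonneg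
  simp only [funext hS, ← piKronecker_mul, star_eq_conjTranspose, ← conjTranspose_piKronecker]
  exact posSemidef_conjTranspose_mul_self _

end piKronecker

section l2OpNorm

variable {𝕜 m n o : Type*} [RCLike 𝕜] [Fintype m] [Fintype n] [DecidableEq n] [Fintype o]
  [DecidableEq o]

open scoped RealInnerProductSpace in
lemma abs_dotProduct_mulVec_le (A : Matrix m n ℝ) (x : EuclideanSpace ℝ m)
    (y : EuclideanSpace ℝ n) : |x.ofLp ⬝ᵥ A *ᵥ y.ofLp| ≤ ‖A‖ * ‖x‖ * ‖y‖ :=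
  calc |x.ofLp ⬝ᵥ A *ᵥ y.ofLp| = |⟪x, WithLp.toLp 2 (A *ᵥ y.ofLp)⟫| := by
        rw [EuclideanSpace.inner_eq_star_dotProduct, dotProduct_comm]; rfl
    _ ≤ ‖x‖ * ‖WithLp.toLp 2 (A *ᵥ y.ofLp)‖ := abs_real_inner_le_norm _ _
    _ ≤ ‖x‖ * (‖A‖ * ‖y‖) := by gcongr; exact l2_opNorm_mulVec A y
    _ = ‖A‖ * ‖x‖ * ‖y‖ := by ring

lemma l2_opNorm_blockDiagonal_le (M : o → Matrix m n 𝕜) {c : ℝ} (hc : 0 ≤ c)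
    (hM : ∀ k, ‖M k‖ ≤ c) : ‖blockDiagonal M‖ ≤ c := by
  rw [l2_opNorm_def]
  refine ContinuousLinearMap.opNorm_le_bound _ hc fun x => ?_
  set col : o → EuclideanSpace 𝕜 n := fun k => WithLp.toLp 2 fun j => x (j, k)
  have hx : ‖x‖ ^ 2 = ∑ k, ‖col k‖ ^ 2 := by
    simp [col, EuclideanSpace.norm_sq_eq, Fintype.sum_prod_type, Finset.sum_comm (γ := n)]
  have hMx : ‖(toEuclideanLin.trans LinearMap.toContinuousLinearMap) (blockDiagonal M) x‖ ^ 2 =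
      ∑ k, ‖(EuclideanSpace.equiv m 𝕜).symm (M k *ᵥ col k)‖ ^ 2 := by
    simp [col, EuclideanSpace.norm_sq_eq, Fintype.sum_prod_type, Finset.sum_comm (γ := m),
      mulVec, dotProduct, blockDiagonal_apply']
  refine (sq_le_sq₀ (norm_nonneg _) (by positivity)).mp ?_
  calc _ = ∑ k, ‖(EuclideanSpace.equiv m 𝕜).symm (M k *ᵥ col k)‖ ^ 2 := hMx
    _ ≤ ∑ k, (c * ‖col k‖) ^ 2 := by
        gcongr with k
        exact (l2_opNorm_mulVec (M k) (col k)).trans (by gcongr; exact hM k)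
    _ = (c * ‖x‖) ^ 2 := by rw [mul_pow, hx, Finset.mul_sum]; simp only [mul_pow]

lemma l2_opNorm_conjTranspose_mul_mul_self_le [DecidableEq m] (W : Matrix m n 𝕜)
    (M : Matrix m m 𝕜) : ‖Wᴴ * M * W‖ ≤ ‖M‖ * ‖Wᴴ * W‖ :=
  calc ‖Wᴴ * M * W‖ ≤ ‖Wᴴ‖ * ‖M‖ * ‖W‖ :=
        (l2_opNorm_mul _ _).trans (by gcongr; exact l2_opNorm_mul _ _)
    _ = ‖M‖ * ‖Wᴴ * W‖ := by
        rw [l2_opNorm_conjTranspose_mul_self, l2_opNorm_conjTranspose]; ring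

open scoped MatrixOrder ComplexOrder in
lemma l2_opNorm_submatrix_hadamard_le {α γ : Type*} [Fintype α] [DecidableEq α] [Fintype γ]
    [DecidableEq γ] (B : Matrix γ γ 𝕜) (f : α → γ) {P : Matrix α α 𝕜} (hP : P.PosSemidef)
    {d : ℝ} (hd : 0 ≤ d) (hfibre : ∀ a b, f a = f b → a ≠ b → P a b = 0)
    (hdiag : ∀ a, ‖P a a‖ ≤ d) :
    ‖B.submatrix f f ⊙ P‖ ≤ ‖B‖ * d := by
  obtain ⟨U, rfl⟩ := CStarAlgebra.nonneg_iff_eq_star_mul_self.mp hP.nonneg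
  set W : Matrix (γ × α) α 𝕜 := of fun ck a => if f a = ck.1 then U ck.2 a else 0
  have hsandwich : B.submatrix f f ⊙ (star U * U) =
      Wᴴ * blockDiagonal (fun _ : α => B) * W := by
    ext a b
    simp only [W, hadamard_apply, submatrix_apply, mul_apply, conjTranspose_apply, of_apply,
      Fintype.sum_prod_type, blockDiagonal_apply', apply_ite star, star_zero]
    simp [Finset.mul_sum, ite_mul, mul_comm, mul_left_comm]
  have hgram : Wᴴ * W = diagonal fun a => (star U * U) a a := by
    ext a b
    simp only [W, mul_apply, conjTranspose_apply, of_apply, Fintype.sum_prod_type, diagonal_apply,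
      apply_ite star, star_zero, ite_mul, zero_mul, mul_ite, mul_zero]
    rw [Finset.sum_comm]
    simp only [Finset.sum_ite_eq, Finset.mem_univ, if_true]
    rcases eq_or_ne a b with rfl | hab
    · simp
    · by_cases hf : f a = f b
      · simpa [hf, hab, mul_apply] using hfibre a b hf hab
      · simp [hf, hab]
  calc ‖B.submatrix f f ⊙ (star U * U)‖ = ‖Wᴴ * blockDiagonal (fun _ : α => B) * W‖ := by
        rw [hsandwich]
    _ ≤ ‖blockDiagonal fun _ : α => B‖ * ‖Wᴴ * W‖ := l2_opNorm_conjTranspose_mul_mul_self_le _ _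
    _ ≤ ‖B‖ * d := by
      gcongr
      · exact l2_opNorm_blockDiagonal_le _ (norm_nonneg B) fun _ => le_rfl
      · rw [hgram, l2_opNorm_diagonal]; exact (pi_norm_le_iff_of_nonneg hd).mpr hdiag

end l2OpNorm

end Matrix

lemma matSpectralNorm_eq_l2_opNorm {m n : Type*} [Fintype m] [Fintype n] [DecidableEq n]
    (A : Matrix m n ℝ) : matSpectralNorm A = ‖A‖ :=
  rfl

lemma hatMatrix_posSemidef {m n : ℕ} (A : Matrix (Fin m) (Fin n) ℝ) :
    (hatMatrix A).PosSemidef := by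
  refine .of_dotProduct_mulVec_nonneg ?_ fun z => ?_
  · exact IsHermitian.fromBlocks (isHermitian_one.smul (.all _)) rfl
      (isHermitian_one.smul (.all _))
  set x : EuclideanSpace ℝ (Fin m) := WithLp.toLp 2 (z ∘ Sum.inl)
  set y : EuclideanSpace ℝ (Fin n) := WithLp.toLp 2 (z ∘ Sum.inr)
  have hz : z = Sum.elim x.ofLp y.ofLp := by ext (i | j) <;> rfl
  have hform : star z ⬝ᵥ hatMatrix A *ᵥ z =
      ‖A‖ * ‖x‖ ^ 2 + 2 * (x.ofLp ⬝ᵥ A *ᵥ y.ofLp) + ‖A‖ * ‖y‖ ^ 2 := by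
    rw [hz, hatMatrix, matSpectralNorm_eq_l2_opNorm, fromBlocks_mulVec, star_trivial,
      Sum.elim_comp_inl, Sum.elim_comp_inr, sumElim_dotProduct_sumElim, mulVec_transpose,
      dotProduct_add, dotProduct_add, dotProduct_comm y.ofLp, ← dotProduct_mulVec]
    simp only [smul_mulVec, one_mulVec, dotProduct_smul, EuclideanSpace.real_norm_sq_eq]
    simp only [smul_eq_mul, dotProduct, ← sq]
    ring
  have hcross := abs_le.mp (abs_dotProduct_mulVec_le A x y)
  rw [hform]
  nlinarith [mul_nonneg (norm_nonneg A) (sq_nonneg (‖x‖ - ‖y‖))]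

lemma hatMatrix_apply_self {m n : ℕ} (A : Matrix (Fin m) (Fin n) ℝ) (a : Fin m ⊕ Fin n) :
    hatMatrix A a a = matSpectralNorm A := by
  rcases a with j | k <;> simp [hatMatrix]

lemma hatMatrix_apply_eq_zero_of_isRight_eq {m n : ℕ} (A : Matrix (Fin m) (Fin n) ℝ)
    {a b : Fin m ⊕ Fin n} (hab : a.isRight = b.isRight) (hne : a ≠ b) : hatMatrix A a b = 0 := by
  rcases a with j | k <;> rcases b with j' | k' <;> simp_all [hatMatrix, one_apply]

theorem stmt7_general {N : ℕ} {m n : Fin N → ℕ}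
    (B : Matrix (Fin N → Bool) (Fin N → Bool) ℝ)
    (A : ∀ i, Matrix (Fin (m i)) (Fin (n i)) ℝ) :
    matSpectralNorm (matrixComposition B A) ≤ matSpectralNorm B * ∏ i, matSpectralNorm (A i) := by
  set f : (∀ i, Fin (m i) ⊕ Fin (n i)) → Fin N → Bool := fun a i => (a i).isRight
  have hC : matrixComposition B A = B.submatrix f f ⊙ piKronecker fun i => hatMatrix (A i) := rfl
  rw [hC, matSpectralNorm_eq_l2_opNorm, matSpectralNorm_eq_l2_opNorm]
  refine l2_opNorm_submatrix_hadamard_le B f (.piKronecker fun i => hatMatrix_posSemidef (A i))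
    (Finset.prod_nonneg fun i _ => norm_nonneg _) (fun a b hf hne => ?_) fun a => ?_
  · obtain ⟨i, hi⟩ := Function.ne_iff.mp hne
    exact Finset.prod_eq_zero (Finset.mem_univ i)
      (hatMatrix_apply_eq_zero_of_isRight_eq (A i) (congrFun hf i) hi)
  · simp only [piKronecker_apply, hatMatrix_apply_self, matSpectralNorm_eq_l2_opNorm]
    exact (Real.norm_of_nonneg (Finset.prod_nonneg fun i _ => norm_nonneg _)).le

/-- For a symmetric matrix `B` and arbitrary matrices `A_1, …, A_N`, the matrix composition
`C` of `B` with `A_1, …, A_N` satisfies `‖C‖ ≤ ‖B‖ · ∏ i ‖A_i‖`. -/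
theorem stmt7 {N : ℕ} {m n : Fin N → ℕ}
    (B : Matrix (Fin N → Bool) (Fin N → Bool) ℝ) (hB : B.IsSymm)
    (A : ∀ i, Matrix (Fin (m i)) (Fin (n i)) ℝ) :
    matSpectralNorm (matrixComposition B A) ≤ matSpectralNorm B * ∏ i, matSpectralNorm (A i) :=
  stmt7_general B A
end

section
/- Let f ⊆ {0,1}^N × [K] be a relation and g : {0,1}^m → {0,1} a Boolean function. Then ADV±_rel(f ∘ g^N) ≤ ADV±_rel(f) · ADV±(g), where the composed relation h = f ∘ g^N ⊆ {0,1}^{Nm} × [K] is defined by ((x_1,…,x_N), a) ∈ h iff ((g(x_1),…,g(x_N)), a) ∈ f. -/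
/-!
Feasible solutions compose by tensoring. From a solution `(ψ, φ, σ)` for `f` and `(u, v)` for
`g`, the vectors `α_{x,(p,q)} = ψ_{x̃,p} ⊗ u_{x_p,q}`, `β_{x,(p,q)} = φ_{x̃,p} ⊗ v_{x_p,q}` and
`ρ_{x,a} = σ_{x̃,a}`, placed in orthogonal summands, are feasible for `f ∘ gᴺ` with objective at
most the product of the two objectives: summing over the block index `q` first turns
`⟨u_{x_p,q}, v_{x'_p,q}⟩` into the indicator of `g x_p ≠ g x'_p`, which is exactly the Hamming
filter in the constraint for `f`. Taking infima gives the bound.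

Since `sInf ∅ = 0`, the degenerate cases need separate care. A relation is feasible iff every
input has an admissible answer. If `g` is surjective, this passes from `f ∘ gᴺ` to `f`; if `g` is
constant, a feasible `f ∘ gᴺ` has a universally admissible answer and hence value `0`.
-/

open Matrix

/-- The (dual formulation of the) negative weight adversary bound `ADV±(g)` of a Boolean
function `g`: the infimum over all families of finite-dimensional vectors
`{u_{y,i}}, {v_{y,i}}` satisfying the dual adversary constraints of the larger of the two
maximal squared norms. -/
noncomputable def adv {ι : Type} [Fintype ι] [DecidableEq ι]
    (g : (ι → Bool) → Bool) : ℝ :=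
  sInf {c : ℝ | ∃ d : ℕ, ∃ u v : (ι → Bool) → ι → (Fin d → ℝ),
    (∀ y, ∑ i, ∑ t, u y i t ^ 2 ≤ c) ∧
    (∀ y, ∑ i, ∑ t, v y i t ^ 2 ≤ c) ∧
    (∀ y y' : ι → Bool,
      (∑ i ∈ Finset.univ.filter fun i => y i ≠ y' i, u y i ⬝ᵥ v y' i)
        = if g y = g y' then 0 else 1)}

/-- The relational adversary bound `ADV±_rel(f)` of a relation
`f ⊆ {0,1}^ι × [K]`: the infimum over all families `{ψ_{z,p}}, {φ_{z,p}}, {σ_{z,a}}` of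
finite-dimensional vectors satisfying the relational dual adversary constraints of the larger
of the two maximal squared norms. -/
noncomputable def advRel {ι : Type} [Fintype ι] [DecidableEq ι] {K : ℕ}
    (f : (ι → Bool) → Fin K → Prop) : ℝ :=
  sInf {c : ℝ | ∃ d : ℕ, ∃ ψ φ : (ι → Bool) → ι → (Fin d → ℝ),
    ∃ σ : (ι → Bool) → Fin K → (Fin d → ℝ),
    (∀ z, ∑ p, ∑ t, ψ z p t ^ 2 ≤ c) ∧
    (∀ z, ∑ p, ∑ t, φ z p t ^ 2 ≤ c) ∧
    (∀ z z' : ι → Bool,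
      (∑ p ∈ Finset.univ.filter fun p => z p ≠ z' p, ψ z p ⬝ᵥ φ z' p)
        = 1 - ∑ a, σ z a ⬝ᵥ σ z' a) ∧
    (∀ z a, ¬ f z a → σ z a = 0)}

open Finset Function

section Feasibility

variable {ι κ : Type} [Fintype ι] [Fintype κ] {K : ℕ}

lemma sum_sq_eq_dotProduct_self (w : κ → ℝ) : ∑ t, w t ^ 2 = w ⬝ᵥ w := by
  simp [dotProduct, sq]

def IsAdvSolution (g : (ι → Bool) → Bool) (c : ℝ) (u v : (ι → Bool) → ι → κ → ℝ) : Prop :=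
  (∀ y, ∑ i, u y i ⬝ᵥ u y i ≤ c) ∧ (∀ y, ∑ i, v y i ⬝ᵥ v y i ≤ c) ∧
    ∀ y y', ∑ i ∈ univ.filter (fun i => y i ≠ y' i), u y i ⬝ᵥ v y' i =
      if g y = g y' then 0 else 1

def IsAdvRelSolution (f : (ι → Bool) → Fin K → Prop) (c : ℝ) (ψ φ : (ι → Bool) → ι → κ → ℝ)
    (σ : (ι → Bool) → Fin K → κ → ℝ) : Prop :=
  (∀ z, ∑ p, ψ z p ⬝ᵥ ψ z p ≤ c) ∧ (∀ z, ∑ p, φ z p ⬝ᵥ φ z p ≤ c) ∧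
    (∀ z z', ∑ p ∈ univ.filter (fun p => z p ≠ z' p), ψ z p ⬝ᵥ φ z' p =
      1 - ∑ a, σ z a ⬝ᵥ σ z' a) ∧
    ∀ z a, ¬ f z a → σ z a = 0

def advValues (g : (ι → Bool) → Bool) : Set ℝ :=
  {c | ∃ (κ : Type) (_ : Fintype κ) (u v : (ι → Bool) → ι → κ → ℝ), IsAdvSolution g c u v}

def advRelValues (f : (ι → Bool) → Fin K → Prop) : Set ℝ :=
  {c | ∃ (κ : Type) (_ : Fintype κ) (ψ φ : (ι → Bool) → ι → κ → ℝ)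
    (σ : (ι → Bool) → Fin K → κ → ℝ), IsAdvRelSolution f c ψ φ σ}

lemma IsAdvSolution.comp_equiv {κ' : Type} [Fintype κ'] {g : (ι → Bool) → Bool} {c : ℝ}
    {u v : (ι → Bool) → ι → κ → ℝ} (h : IsAdvSolution g c u v) (e : κ' ≃ κ) :
    IsAdvSolution g c (fun y i => u y i ∘ e) (fun y i => v y i ∘ e) := by
  simpa only [IsAdvSolution, comp_equiv_dotProduct_comp_equiv] using h

lemma IsAdvRelSolution.comp_equiv {κ' : Type} [Fintype κ'] {f : (ι → Bool) → Fin K → Prop}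
    {c : ℝ} {ψ φ : (ι → Bool) → ι → κ → ℝ} {σ : (ι → Bool) → Fin K → κ → ℝ}
    (h : IsAdvRelSolution f c ψ φ σ) (e : κ' ≃ κ) :
    IsAdvRelSolution f c (fun z p => ψ z p ∘ e) (fun z p => φ z p ∘ e)
      (fun z a => σ z a ∘ e) := by
  obtain ⟨hψ, hφ, hψφ, hσ⟩ := h
  refine ⟨by simpa using hψ, by simpa using hφ, by simpa using hψφ, fun z a hza => ?_⟩
  simp [hσ z a hza]

lemma adv_eq_sInf [DecidableEq ι] (g : (ι → Bool) → Bool) : adv g = sInf (advValues g) := by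
  refine congrArg sInf (Set.ext fun c => ⟨?_, ?_⟩)
  · rintro ⟨d, u, v, hsol⟩
    refine ⟨Fin d, inferInstance, u, v, ?_⟩
    simpa only [IsAdvSolution, sum_sq_eq_dotProduct_self] using hsol
  · rintro ⟨κ, _, u, v, hsol⟩
    have hsol' := hsol.comp_equiv (Fintype.equivFin κ).symm
    simp only [IsAdvSolution, sum_sq_eq_dotProduct_self] at hsol' ⊢
    exact ⟨_, _, _, hsol'⟩

lemma advRel_eq_sInf [DecidableEq ι] (f : (ι → Bool) → Fin K → Prop) :
    advRel f = sInf (advRelValues f) := by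
  refine congrArg sInf (Set.ext fun c => ⟨?_, ?_⟩)
  · rintro ⟨d, ψ, φ, σ, hsol⟩
    refine ⟨Fin d, inferInstance, ψ, φ, σ, ?_⟩
    simpa only [IsAdvRelSolution, sum_sq_eq_dotProduct_self] using hsol
  · rintro ⟨κ, _, ψ, φ, σ, hsol⟩
    have hsol' := hsol.comp_equiv (Fintype.equivFin κ).symm
    simp only [IsAdvRelSolution, sum_sq_eq_dotProduct_self] at hsol' ⊢
    exact ⟨_, _, _, _, hsol'⟩

end Feasibility

section Solutions

variable {ι κ : Type} [Fintype ι] [Fintype κ] {K : ℕ}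

lemma IsAdvSolution.nonneg {g : (ι → Bool) → Bool} {c : ℝ} {u v : (ι → Bool) → ι → κ → ℝ}
    (h : IsAdvSolution g c u v) : 0 ≤ c :=
  (sum_nonneg fun i _ => sum_nonneg fun t _ => mul_self_nonneg (u default i t)).trans
    (h.1 default)

lemma IsAdvRelSolution.nonneg {f : (ι → Bool) → Fin K → Prop} {c : ℝ}
    {ψ φ : (ι → Bool) → ι → κ → ℝ} {σ : (ι → Bool) → Fin K → κ → ℝ}
    (h : IsAdvRelSolution f c ψ φ σ) : 0 ≤ c :=
  (sum_nonneg fun p _ => sum_nonneg fun t _ => mul_self_nonneg (ψ default p t)).trans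
    (h.1 default)

lemma IsAdvRelSolution.exists_answer {f : (ι → Bool) → Fin K → Prop} {c : ℝ}
    {ψ φ : (ι → Bool) → ι → κ → ℝ} {σ : (ι → Bool) → Fin K → κ → ℝ}
    (h : IsAdvRelSolution f c ψ φ σ) (z : ι → Bool) : ∃ a, f z a := by
  by_contra! hz
  have hzz := h.2.2.1 z z
  simp [h.2.2.2 z _ (hz _)] at hzz

lemma zero_mem_advRelValues {f : (ι → Bool) → Fin K → Prop} {a₀ : Fin K} (h : ∀ z, f z a₀) :
    0 ∈ advRelValues f := by
  refine ⟨Unit, inferInstance, 0, 0, fun _ a _ => if a = a₀ then 1 else 0, ?_⟩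
  refine ⟨by simp, by simp, fun z z' => by simp [dotProduct], fun z a hza => funext fun _ => ?_⟩
  have : a ≠ a₀ := by rintro rfl; exact hza (h z)
  simp [this]

end Solutions

section Realization

variable {ι : Type} [Fintype ι]

lemma exists_forall_le_and_forall_le {α : Type} [Finite α] (F G : α → ℝ) :
    ∃ c, (∀ a, F a ≤ c) ∧ ∀ a, G a ≤ c := by
  obtain ⟨c, hc⟩ := Finite.exists_le fun a => max (F a) (G a)
  exact ⟨c, fun a => (le_max_left _ _).trans (hc a), fun a => (le_max_right _ _).trans (hc a)⟩

-- Coordinates are indexed by pairs `(z, z')`; `D z z'` is spread evenly over the positions where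
-- `z` and `z'` differ.
lemma exists_sum_dotProduct_eq (D : (ι → Bool) → (ι → Bool) → ℝ) :
    ∃ (κ : Type) (_ : Fintype κ) (u v : (ι → Bool) → ι → κ → ℝ), ∀ z z', z ≠ z' →
      ∑ i ∈ univ.filter (fun i => z i ≠ z' i), u z i ⬝ᵥ v z' i = D z z' := by
  classical
  refine ⟨(ι → Bool) × (ι → Bool), inferInstance,
    fun z _ w => if w.1 = z then D z w.2 / #(univ.filter fun i => z i ≠ w.2 i) else 0,
    fun z' _ w => if w.2 = z' then 1 else 0, fun z z' hzz' => ?_⟩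
  have hcard : (#(univ.filter fun i => z i ≠ z' i) : ℝ) ≠ 0 := by
    obtain ⟨i, hi⟩ := Function.ne_iff.mp hzz'
    exact Nat.cast_ne_zero.mpr (card_pos.mpr ⟨i, by simpa using hi⟩).ne'
  simp only [dotProduct, Fintype.sum_prod_type]
  simp [mul_div_cancel₀, hcard]

end Realization

section Nonempty

variable {ι : Type} [Fintype ι] {K : ℕ}

lemma advValues_nonempty (g : (ι → Bool) → Bool) : (advValues g).Nonempty := by
  obtain ⟨κ, _, u, v, huv⟩ :=
    exists_sum_dotProduct_eq fun y y' : ι → Bool => if g y = g y' then (0 : ℝ) else 1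
  obtain ⟨c, hu, hv⟩ := exists_forall_le_and_forall_le
    (fun y => ∑ i, u y i ⬝ᵥ u y i) (fun y => ∑ i, v y i ⬝ᵥ v y i)
  refine ⟨c, κ, _, u, v, hu, hv, fun y y' => ?_⟩
  rcases eq_or_ne y y' with rfl | hyy'
  · simp
  · exact huv y y' hyy'

lemma advRelValues_nonempty {f : (ι → Bool) → Fin K → Prop} (hf : ∀ z, ∃ a, f z a) :
    (advRelValues f).Nonempty := by
  classical
  choose ans hans using hf
  obtain ⟨κ, _, u, v, huv⟩ := exists_sum_dotProduct_eq fun _ _ : ι → Bool => (1 : ℝ)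
  let σ : (ι → Bool) → Fin K → (ι → Bool) → ℝ :=
    fun z a => Pi.single z (if a = ans z then 1 else 0)
  have hσσ : ∀ z z', ∑ a, σ z a ⬝ᵥ σ z' a = if z = z' then 1 else 0 := by
    intro z z'
    rcases eq_or_ne z z' with rfl | hzz'
    · simp [σ]
    · simp [σ, hzz']
  obtain ⟨c, hu, hv⟩ := exists_forall_le_and_forall_le
    (fun z => ∑ p, Sum.elim (u z p) (0 : (ι → Bool) → ℝ) ⬝ᵥ Sum.elim (u z p) 0)
    (fun z => ∑ p, Sum.elim (v z p) (0 : (ι → Bool) → ℝ) ⬝ᵥ Sum.elim (v z p) 0)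
  refine ⟨c, κ ⊕ (ι → Bool), inferInstance, fun z p => Sum.elim (u z p) 0,
    fun z p => Sum.elim (v z p) 0, fun z a => Sum.elim 0 (σ z a), hu, hv, fun z z' => ?_,
    fun z a hza => ?_⟩
  · simp only [sumElim_dotProduct_sumElim, dotProduct_zero, add_zero, zero_add, hσσ]
    rcases eq_or_ne z z' with rfl | hzz'
    · simp
    · simp [huv z z' hzz', hzz']
  · have : a ≠ ans z := by rintro rfl; exact hza (hans z)
    simp [σ, this]

end Nonempty

section Composition

variable {ι ι' κ κ' : Type} [Fintype ι] [Fintype ι'] [Fintype κ] [Fintype κ'] {K : ℕ}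

lemma dotProduct_mul_fst_snd (a a' : κ → ℝ) (b b' : κ' → ℝ) :
    (fun s : κ × κ' => a s.1 * b s.2) ⬝ᵥ (fun s => a' s.1 * b' s.2) = (a ⬝ᵥ a') * (b ⬝ᵥ b') := by
  simp only [dotProduct, Fintype.sum_prod_type, sum_mul_sum]
  exact sum_congr rfl fun _ _ => sum_congr rfl fun _ _ => by ring

lemma sum_prod_mul_le_mul {A : ι → ℝ} {B : ι → ι' → ℝ} {a b : ℝ} (hA₀ : ∀ p, 0 ≤ A p)
    (hb : 0 ≤ b) (hA : ∑ p, A p ≤ a) (hB : ∀ p, ∑ q, B p q ≤ b) :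
    ∑ ℓ : ι × ι', A ℓ.1 * B ℓ.1 ℓ.2 ≤ a * b :=
  calc ∑ ℓ : ι × ι', A ℓ.1 * B ℓ.1 ℓ.2
      = ∑ p, A p * ∑ q, B p q := by simp only [Fintype.sum_prod_type, mul_sum]
    _ ≤ ∑ p, A p * b := sum_le_sum fun p _ => mul_le_mul_of_nonneg_left (hB p) (hA₀ p)
    _ = (∑ p, A p) * b := (sum_mul ..).symm
    _ ≤ a * b := mul_le_mul_of_nonneg_right hA hb

lemma sum_filter_ne_prod_mul (x x' : ι × ι' → Bool) (A : ι → ℝ) (B : ι → ι' → ℝ) :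
    ∑ ℓ ∈ univ.filter (fun ℓ => x ℓ ≠ x' ℓ), A ℓ.1 * B ℓ.1 ℓ.2 =
      ∑ p, A p * ∑ q ∈ univ.filter (fun q => curry x p q ≠ curry x' p q), B p q := by
  rw [sum_filter, Fintype.sum_prod_type]
  refine sum_congr rfl fun p _ => ?_
  rw [sum_filter, mul_sum]
  exact sum_congr rfl fun q _ => by by_cases h : x (p, q) = x' (p, q) <;> simp [h]

theorem IsAdvRelSolution.comp {f : (ι → Bool) → Fin K → Prop} {g : (ι' → Bool) → Bool}
    {cf cg : ℝ} {ψ φ : (ι → Bool) → ι → κ → ℝ} {σ : (ι → Bool) → Fin K → κ → ℝ}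
    {u v : (ι' → Bool) → ι' → κ' → ℝ}
    (hf : IsAdvRelSolution f cf ψ φ σ) (hg : IsAdvSolution g cg u v) :
    IsAdvRelSolution (fun x a => f (g ∘ curry x) a) (cf * cg)
      (fun x ℓ => Sum.elim
        (fun s : κ × κ' => ψ (g ∘ curry x) ℓ.1 s.1 * u (curry x ℓ.1) ℓ.2 s.2) 0)
      (fun x ℓ => Sum.elim
        (fun s : κ × κ' => φ (g ∘ curry x) ℓ.1 s.1 * v (curry x ℓ.1) ℓ.2 s.2) 0)
      (fun x a => Sum.elim 0 (σ (g ∘ curry x) a)) := by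
  obtain ⟨hψ, hφ, hψφ, hσ⟩ := hf
  obtain ⟨hu, hv, huv⟩ := hg
  have hcg : 0 ≤ cg := IsAdvSolution.nonneg ⟨hu, hv, huv⟩
  simp only [IsAdvRelSolution, sumElim_dotProduct_sumElim, dotProduct_mul_fst_snd,
    dotProduct_zero, add_zero, zero_add]
  refine ⟨fun x => sum_prod_mul_le_mul (fun _ => sum_nonneg fun _ _ => mul_self_nonneg _) hcg
      (hψ _) fun p => hu _,
    fun x => sum_prod_mul_le_mul (fun _ => sum_nonneg fun _ _ => mul_self_nonneg _) hcg
      (hφ _) fun p => hv _,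
    fun x x' => ?_, fun x a hxa => by simp [hσ _ a hxa]⟩
  refine (sum_filter_ne_prod_mul x x' (fun p => ψ (g ∘ curry x) p ⬝ᵥ φ (g ∘ curry x') p)
    (fun p q => u (curry x p) q ⬝ᵥ v (curry x' p) q)).trans ?_
  rw [← hψφ, sum_filter]
  refine sum_congr rfl fun p _ => ?_
  rw [huv]
  by_cases hp : g (curry x p) = g (curry x' p) <;> simp [hp]

end Composition

lemma le_sInf_mul_sInf {S T : Set ℝ} {a : ℝ} (hS : S.Nonempty) (hT : T.Nonempty)
    (hS₀ : ∀ s ∈ S, 0 ≤ s) (hT₀ : ∀ t ∈ T, 0 ≤ t) (h : ∀ s ∈ S, ∀ t ∈ T, a ≤ s * t) :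
    a ≤ sInf S * sInf T := by
  have hST : ∀ t ∈ T, a ≤ sInf S * t := fun t ht => by
    rw [mul_comm, ← smul_eq_mul, ← Real.sInf_smul_of_nonneg (hT₀ t ht)]
    refine le_csInf hS.smul_set ?_
    rintro _ ⟨s, hs, rfl⟩
    exact (h s hs t ht).trans_eq (mul_comm _ _)
  rw [← smul_eq_mul, ← Real.sInf_smul_of_nonneg (Real.sInf_nonneg hS₀)]
  exact le_csInf hT.smul_set (by rintro _ ⟨t, ht, rfl⟩; exact hST t ht)

section Bounds

variable {ι ι' : Type} [Fintype ι] [DecidableEq ι] [Fintype ι'] [DecidableEq ι'] {K : ℕ}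

lemma adv_nonneg (g : (ι → Bool) → Bool) : 0 ≤ adv g :=
  (adv_eq_sInf g).symm ▸ Real.sInf_nonneg fun _ ⟨_, _, _, _, h⟩ => h.nonneg

lemma advRel_nonneg (f : (ι → Bool) → Fin K → Prop) : 0 ≤ advRel f :=
  (advRel_eq_sInf f).symm ▸ Real.sInf_nonneg fun _ ⟨_, _, _, _, _, h⟩ => h.nonneg

lemma advRel_le {f : (ι → Bool) → Fin K → Prop} {c : ℝ} (hc : c ∈ advRelValues f) :
    advRel f ≤ c :=
  (advRel_eq_sInf f).symm ▸ csInf_le ⟨0, fun _ ⟨_, _, _, _, _, h⟩ => h.nonneg⟩ hc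

theorem advRel_comp_le {f : (ι → Bool) → Fin K → Prop} (hf : (advRelValues f).Nonempty)
    (g : (ι' → Bool) → Bool) :
    advRel (fun (x : ι × ι' → Bool) a => f (g ∘ curry x) a) ≤ advRel f * adv g := by
  rw [advRel_eq_sInf f, adv_eq_sInf g]
  refine le_sInf_mul_sInf hf (advValues_nonempty g) (fun _ ⟨_, _, _, _, _, h⟩ => h.nonneg)
    (fun _ ⟨_, _, _, _, h⟩ => h.nonneg) ?_
  rintro s ⟨κ, _, ψ, φ, σ, hs⟩ t ⟨κ', _, u, v, ht⟩
  exact advRel_le ⟨_, _, _, _, _, hs.comp ht⟩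

end Bounds

lemma Bool.exists_eq_const_or_surjective {α : Type*} (g : α → Bool) :
    (∃ b, ∀ y, g y = b) ∨ Surjective g := by
  by_cases hg : Surjective g
  · exact .inr hg
  obtain ⟨b, hb⟩ := not_forall.mp hg
  exact .inl ⟨!b, fun y => Bool.eq_not_iff.mpr fun hy => hb ⟨y, hy⟩⟩

lemma exists_answer_of_comp {ι ι' : Type} {K : ℕ} {f : (ι → Bool) → Fin K → Prop}
    {g : (ι' → Bool) → Bool} (hg : Surjective g) (h : ∀ x : ι × ι' → Bool, ∃ a, f (g ∘ curry x) a)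
    (z : ι → Bool) : ∃ a, f z a := by
  choose sec hsec using hg
  obtain ⟨a, ha⟩ := h fun ℓ => sec (z ℓ.1) ℓ.2
  have hz : g ∘ curry (fun ℓ : ι × ι' => sec (z ℓ.1) ℓ.2) = z := funext fun p => hsec (z p)
  exact ⟨a, hz ▸ ha⟩

/-- For a relation `f ⊆ {0,1}^N × [K]` and a Boolean function `g : {0,1}^m → {0,1}`,
`ADV±_rel(f ∘ gᴺ) ≤ ADV±_rel(f) · ADV±(g)`, where the composed relation `h ⊆ {0,1}^{Nm} × [K]`
is given by `((x_1,…,x_N), a) ∈ h` iff `((g x_1, …, g x_N), a) ∈ f`. -/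
theorem stmt15 {N m K : ℕ} (f : (Fin N → Bool) → Fin K → Prop)
    (g : (Fin m → Bool) → Bool) :
    advRel (fun (x : Fin N × Fin m → Bool) (a : Fin K) =>
        f (fun p => g fun q => x (p, q)) a)
      ≤ advRel f * adv g := by
  have hrhs : 0 ≤ advRel f * adv g := mul_nonneg (advRel_nonneg f) (adv_nonneg g)
  change advRel (fun (x : Fin N × Fin m → Bool) a => f (g ∘ curry x) a) ≤ _
  rcases (advRelValues fun (x : Fin N × Fin m → Bool) a => f (g ∘ curry x) a).eq_empty_or_nonempty
    with hempty | ⟨c, κ, _, α, β, ρ, hsol⟩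
  · rwa [advRel_eq_sInf, hempty, Real.sInf_empty]
  rcases Bool.exists_eq_const_or_surjective g with ⟨b, hb⟩ | hg
  · obtain ⟨a₀, ha₀⟩ := hsol.exists_answer default
    have hconst : ∀ x : Fin N × Fin m → Bool, g ∘ curry x = g ∘ curry default :=
      fun _ => funext fun _ => (hb _).trans (hb _).symm
    exact (advRel_le (zero_mem_advRelValues fun x => (hconst x).symm ▸ ha₀)).trans hrhs
  · exact advRel_comp_le (advRelValues_nonempty (exists_answer_of_comp hg hsol.exists_answer)) g
end

section
/- With the composed vectors α_{x,ℓ} = ψ_{x̃,p} ⊗ u_{x_p,q} and β_{x,ℓ} = φ_{x̃,p} ⊗ v_{x_p,q} (ℓ = (p−1)m+q), for any x, y ∈ {0,1}^{Nm}: Σ_{ℓ: x_ℓ ≠ y_ℓ} ⟨α_{x,ℓ}, β_{y,ℓ}⟩ = Σ_{p: x̃_p ≠ ỹ_p} ⟨ψ_{x̃,p}, φ_{ỹ,p}⟩, where x̃ = (g(x_1),…,g(x_N)). -/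
open Matrix

/- The inner product of tensor products factors, `⟨a ⊗ b, c ⊗ d⟩ = ⟨a, c⟩ ⟨b, d⟩`; grouping the
indices `ℓ = (p, q)` by blocks `p`, the dual adversary constraint for `g` collapses the inner sum
over `q` to `[g (x p) ≠ g (y p)]`. -/

theorem sum_sum_mul_mul_eq_dotProduct_mul_dotProduct {R ι κ : Type*} [CommSemiring R]
    [Fintype ι] [Fintype κ] (a c : ι → R) (b d : κ → R) :
    ∑ s, ∑ t, (a s * b t) * (c s * d t) = (a ⬝ᵥ c) * (b ⬝ᵥ d) := by
  rw [dotProduct, dotProduct, Finset.sum_mul_sum]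
  exact Finset.sum_congr rfl fun s _ => Finset.sum_congr rfl fun t _ => by ring

/-- With composed vectors `α_{x,(p,q)} = ψ_{x̃,p} ⊗ u_{x_p,q}` and
`β_{y,(p,q)} = φ_{ỹ,p} ⊗ v_{y_p,q}` (where `x̃ = (g x_1, …, g x_N)`), and the dual adversary
constraint for `g`, for any inputs `x, y`:
`Σ_{ℓ : x_ℓ ≠ y_ℓ} ⟨α_{x,ℓ}, β_{y,ℓ}⟩ = Σ_{p : x̃_p ≠ ỹ_p} ⟨ψ_{x̃,p}, φ_{ỹ,p}⟩`. -/
theorem stmt17 {N m d₁ d₂ : ℕ} (g : (Fin m → Bool) → Bool)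
    (u v : (Fin m → Bool) → Fin m → (Fin d₂ → ℝ))
    (hg : ∀ y y' : Fin m → Bool,
      (∑ q ∈ Finset.univ.filter fun q => y q ≠ y' q, u y q ⬝ᵥ v y' q)
        = if g y = g y' then 0 else 1)
    (ψ φ : (Fin N → Bool) → Fin N → (Fin d₁ → ℝ))
    (x y : Fin N → (Fin m → Bool)) :
    (∑ p, ∑ q ∈ Finset.univ.filter fun q => x p q ≠ y p q,
        ∑ s, ∑ t, (ψ (fun p' => g (x p')) p s * u (x p) q t) *
          (φ (fun p' => g (y p')) p s * v (y p) q t))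
      = ∑ p ∈ Finset.univ.filter fun p => g (x p) ≠ g (y p),
          ψ (fun p' => g (x p')) p ⬝ᵥ φ (fun p' => g (y p')) p := by
  simp_rw [sum_sum_mul_mul_eq_dotProduct_mul_dotProduct, ← Finset.mul_sum, hg, Finset.sum_filter,
    mul_ite, mul_zero, mul_one, ite_not]
end
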